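/- (Galois, 1828) A real number x is a reduced quadratic irrational if and only if x is irrational and its continued fraction expansion is purely periodic, i.e. its sequence of partial quotients (a_n) satisfies: there exists T ≥ 1 such that a_{n+T} = a_n for all n ≥ 0 (equivalently, x_T = x for some T ≥ 1). -/

import Mathlib

/-!
If `x` is reduced with conjugate `c`, so is every complete quotient `xₙ`, with conjugate `cₙ`
given by `cₙ₊₁ = 1 / (cₙ - aₙ)`, and `xₙ, cₙ` are the roots of an integer quadratic whose
discriminant does not depend on `n`. Reducedness bounds its coefficients by the discriminant, so
some pair `(xₙ, cₙ)` repeats; since `aₙ = ⌊-1 / cₙ₊₁⌋`, each pair determines the previous one and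
the repetition propagates back to `x_T = x`.

Conversely, if the partial quotients have period `T`, then `x_T = x` because a continued fraction
determines its value. The convergents give `x = (p x + p') / (q x + q')`, so `x` is a root of
`q t² + (q' - p) t - p'`, whose values at `0` and `-1` have opposite signs; this places the
conjugate in `(-1, 0)`.
-/

/-- The complete quotients of a real number `x`:
`cq x 0 = x` and `cq x (n+1) = 1 / (cq x n - ⌊cq x n⌋)`. -/
noncomputable def cq (x : ℝ) : ℕ → ℝ
  | 0 => x
  | n + 1 => (Int.fract (cq x n))⁻¹

/-- The partial quotients of a real number `x`: `pq x n = ⌊cq x n⌋`. -/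
noncomputable def pq (x : ℝ) (n : ℕ) : ℤ := ⌊cq x n⌋

@[simp]
theorem cq_zero (x : ℝ) : cq x 0 = x := rfl

theorem Irrational.cq {x : ℝ} (hx : Irrational x) : ∀ n, Irrational (cq x n)
  | 0 => hx
  | n + 1 => ((hx.cq n).sub_intCast ⌊_⌋).inv

theorem one_lt_cq_succ {x : ℝ} (hx : Irrational x) (n : ℕ) : 1 < cq x (n + 1) :=
  one_lt_inv_iff₀.mpr ⟨Int.fract_pos.mpr ((hx.cq n).ne_int _), Int.fract_lt_one _⟩

theorem one_lt_cq {x : ℝ} (hx : Irrational x) (hx1 : 1 < x) : ∀ n, 1 < cq x n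
  | 0 => hx1
  | n + 1 => one_lt_cq_succ hx n

theorem one_le_pq {x : ℝ} (hx : Irrational x) (hx1 : 1 < x) (n : ℕ) : 1 ≤ pq x n :=
  Int.le_floor.mpr (by exact_mod_cast (one_lt_cq hx hx1 n).le)

theorem cq_eq_pq_add_inv (x : ℝ) (n : ℕ) : cq x n = pq x n + (cq x (n + 1))⁻¹ := by
  rw [cq, inv_inv, pq, Int.floor_add_fract]

theorem cq_cq (x : ℝ) (m : ℕ) : ∀ n, cq (cq x m) n = cq x (n + m)
  | 0 => by rw [zero_add]; rfl
  | n + 1 => by rw [cq, cq_cq x m n, Nat.add_right_comm]; rfl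

theorem pq_cq (x : ℝ) (m n : ℕ) : pq (cq x m) n = pq x (n + m) :=
  congrArg Int.floor (cq_cq x m n)

theorem pq_add_of_cq_eq_self {x : ℝ} {T : ℕ} (h : cq x T = x) (n : ℕ) :
    pq x (n + T) = pq x n := by
  rw [← pq_cq, h]

theorem cq_mul_cq_succ {x : ℝ} (hx : Irrational x) (n : ℕ) :
    cq x n * cq x (n + 1) = pq x n * cq x (n + 1) + 1 := by
  have hne : cq x (n + 1) ≠ 0 := (zero_lt_one.trans (one_lt_cq_succ hx n)).ne'
  rw [cq_eq_pq_add_inv x n, add_mul, inv_mul_cancel₀ hne]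

open GenContFract in
theorem intFractPair_stream_eq {x : ℝ} (hx : Irrational x) :
    ∀ n, IntFractPair.stream x n = some (IntFractPair.of (cq x n))
  | 0 => IntFractPair.stream_zero x
  | n + 1 => IntFractPair.stream_succ_of_some (intFractPair_stream_eq hx n)
      (Int.fract_pos.mpr ((hx.cq n).ne_int _)).ne'

open GenContFract in
theorem genContFract_of_eq_of_pq_eq {x y : ℝ} (hx : Irrational x) (hy : Irrational y)
    (h : ∀ n, pq x n = pq y n) : GenContFract.of x = GenContFract.of y := by
  ext1
  · rw [of_h_eq_floor, of_h_eq_floor]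
    exact congrArg Int.cast (h 0)
  · refine Stream'.Seq.ext fun n => ?_
    rw [get?_of_eq_some_of_succ_get?_intFractPair_stream (intFractPair_stream_eq hx (n + 1)),
      get?_of_eq_some_of_succ_get?_intFractPair_stream (intFractPair_stream_eq hy (n + 1))]
    exact congrArg (fun z : ℤ => some (⟨1, z⟩ : Pair ℝ)) (h (n + 1))

theorem eq_of_pq_eq {x y : ℝ} (hx : Irrational x) (hy : Irrational y)
    (h : ∀ n, pq x n = pq y n) : x = y :=
  tendsto_nhds_unique (GenContFract.of_convergence x)
    (genContFract_of_eq_of_pq_eq hx hy h ▸ GenContFract.of_convergence y)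

theorem irrational_sqrt_of_squarefree {d : ℕ} (hd : Squarefree d) (h2 : 2 ≤ d) :
    Irrational √d := by
  refine irrational_sqrt_natCast_iff.mpr ?_
  rintro ⟨k, rfl⟩
  obtain rfl : k = 1 := Nat.isUnit_iff.mp (hd k dvd_rfl)
  omega

-- Vieta's formulas: `x` and `c` are the roots of `A t² + B t + C`.
def QuadRoots (A B C : ℤ) (x c : ℝ) : Prop :=
  A ≠ 0 ∧ (B : ℝ) = -A * (x + c) ∧ (C : ℝ) = A * x * c

namespace QuadRoots

variable {A B C : ℤ} {x c : ℝ}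

theorem of_rat {s p : ℚ} (hs : x + c = s) (hp : x * c = p) :
    QuadRoots (s.den * p.den) (-(s.num * p.den)) (p.num * s.den) x c := by
  have hs' : (s : ℝ) * s.den = s.num := by exact_mod_cast Rat.mul_den_eq_num s
  have hp' : (p : ℝ) * p.den = p.num := by exact_mod_cast Rat.mul_den_eq_num p
  refine ⟨by positivity, ?_, ?_⟩
  · push_cast
    rw [hs]
    linear_combination (p.den : ℝ) * hs'
  · push_cast
    rw [mul_assoc, hp]
    linear_combination -(s.den : ℝ) * hp'

theorem exists_add_mul_sqrt (d : ℕ) (r t : ℚ) :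
    ∃ A B C : ℤ, QuadRoots A B C (r + t * √d) (r - t * √d) := by
  have hsqrt : √(d : ℝ) ^ 2 = d := Real.sq_sqrt (Nat.cast_nonneg d)
  exact ⟨_, _, _, of_rat (s := 2 * r) (p := r ^ 2 - t ^ 2 * d) (by push_cast; ring)
    (by push_cast; linear_combination -(t : ℝ) ^ 2 * hsqrt)⟩

theorem disc (h : QuadRoots A B C x c) : ((B ^ 2 - 4 * A * C : ℤ) : ℝ) = (A * (x - c)) ^ 2 := by
  obtain ⟨-, hB, hC⟩ := h
  push_cast
  rw [hB, hC]
  ring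

theorem shift (h : QuadRoots A B C x c) (a : ℤ) (hx : x ≠ a) (hc : c ≠ a) :
    QuadRoots (A * a ^ 2 + B * a + C) (2 * A * a + B) A (x - a)⁻¹ (c - a)⁻¹ := by
  obtain ⟨hA, hB, hC⟩ := h
  have hxa : x - a ≠ 0 := sub_ne_zero.mpr hx
  have hca : c - a ≠ 0 := sub_ne_zero.mpr hc
  have hA' : (((A * a ^ 2 + B * a + C : ℤ)) : ℝ) = A * (x - a) * (c - a) := by
    push_cast; rw [hB, hC]; ring
  refine ⟨?_, ?_, ?_⟩
  · have : (A : ℝ) * (x - a) * (c - a) ≠ 0 := by simp [hA, hxa, hca]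
    exact fun h0 => this (by rw [← hA', h0, Int.cast_zero])
  · rw [hA']; push_cast; rw [hB]; field_simp; ring
  · rw [hA']; field_simp

theorem abs_le_disc (h : QuadRoots A B C x c) (hx : 1 < x) (hc₁ : -1 < c) (hc₀ : c < 0) :
    |A| ≤ B ^ 2 - 4 * A * C ∧ |B| ≤ B ^ 2 - 4 * A * C ∧ |C| ≤ B ^ 2 - 4 * A * C := by
  have hΔ := h.disc
  obtain ⟨-, hB, hC⟩ := h
  have hA2 : ((A ^ 2 : ℤ) : ℝ) ≤ (A * (x - c)) ^ 2 := by
    have : 1 ≤ (x - c) ^ 2 := by nlinarith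
    push_cast; rw [mul_pow]; nlinarith [mul_le_mul_of_nonneg_left this (sq_nonneg (A : ℝ))]
  have hB2 : ((B ^ 2 : ℤ) : ℝ) ≤ (A * (x - c)) ^ 2 := by
    have hxc : 0 < x * -c := mul_pos (by linarith) (neg_pos.mpr hc₀)
    push_cast; rw [hB]; nlinarith [sq_nonneg (A : ℝ)]
  have hC2 : ((C ^ 2 : ℤ) : ℝ) ≤ (A * (x - c)) ^ 2 := by
    push_cast; rw [hC]
    have hc2 : c ^ 2 ≤ 1 := by nlinarith
    have : (x * c) ^ 2 ≤ (x - c) ^ 2 := by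
      rw [mul_pow]; nlinarith [mul_le_mul_of_nonneg_left hc2 (sq_nonneg x)]
    rw [mul_assoc, mul_pow, mul_pow (A : ℝ)]
    exact mul_le_mul_of_nonneg_left this (sq_nonneg _)
  rw [← hΔ] at hA2 hB2 hC2
  norm_cast at hA2 hB2 hC2
  rw [Int.abs_eq_natAbs, Int.abs_eq_natAbs, Int.abs_eq_natAbs]
  exact ⟨(Int.natAbs_le_self_sq A).trans hA2, (Int.natAbs_le_self_sq B).trans hB2,
    (Int.natAbs_le_self_sq C).trans hC2⟩

theorem unique_of_lt {y e : ℝ} (h : QuadRoots A B C x c) (h' : QuadRoots A B C y e)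
    (hex : e < x) : x = y ∧ c = e := by
  obtain ⟨hA, hB, hC⟩ := h
  obtain ⟨-, hB', hC'⟩ := h'
  have hA : (A : ℝ) ≠ 0 := by exact_mod_cast hA
  have hsum : x + c = y + e := mul_left_cancel₀ (neg_ne_zero.mpr hA) (hB.symm.trans hB')
  have hprod : x * c = y * e := by
    simp only [mul_assoc] at hC hC'; exact mul_left_cancel₀ hA (hC.symm.trans hC')
  have : (x - y) * (x - e) = 0 := by linear_combination x * hsum - hprod
  have hxy : x = y :=
    sub_eq_zero.mp ((mul_eq_zero.mp this).resolve_right (sub_ne_zero.mpr hex.ne'))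
  exact ⟨hxy, by linarith⟩

theorem mem_Ioo_of_sign (h : QuadRoots A B C x c) (hA : 0 < A) (hx : 0 < x) (hC : C < 0)
    (hABC : 0 < A - B + C) : c ∈ Set.Ioo (-1) 0 := by
  obtain ⟨-, hB, hC'⟩ := h
  have hA : (0 : ℝ) < A := by exact_mod_cast hA
  have hC : (C : ℝ) < 0 := by exact_mod_cast hC
  have hABC : (0 : ℝ) < A - B + C := by exact_mod_cast hABC
  have hf : (A - B + C : ℝ) = A * (1 + x) * (1 + c) := by rw [hB, hC']; ring
  constructor
  · nlinarith [mul_pos hA (by linarith : (0 : ℝ) < 1 + x)]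
  · nlinarith [mul_pos hA hx]

theorem exists_sqrt (hx : Irrational x) (h : QuadRoots A B C x c) :
    ∃ (d : ℕ) (r t : ℚ), 2 ≤ d ∧ Squarefree d ∧ t ≠ 0 ∧
      x = r + t * √d ∧ c = r - t * √d := by
  have hΔ := h.disc
  obtain ⟨hA, hB, -⟩ := h
  have hA : (A : ℝ) ≠ 0 := by exact_mod_cast hA
  obtain ⟨d, e, hde, hsf⟩ := Nat.sq_mul_squarefree (B ^ 2 - 4 * A * C).toNat
  have hΔnn : 0 ≤ B ^ 2 - 4 * A * C := by exact_mod_cast hΔ ▸ sq_nonneg ((A : ℝ) * (x - c))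
  have hΔe : ((B ^ 2 - 4 * A * C : ℤ) : ℝ) = (e * √d) ^ 2 := by
    rw [← Int.toNat_of_nonneg hΔnn, ← hde, mul_pow, Real.sq_sqrt (Nat.cast_nonneg _)]
    push_cast; ring
  obtain ⟨f, hf⟩ : ∃ f : ℤ, (A : ℝ) * (x - c) = f * √d := by
    rcases sq_eq_sq_iff_eq_or_eq_neg.mp (hΔ.symm.trans hΔe) with h | h
    · exact ⟨e, by rw [h]; push_cast; ring⟩
    · exact ⟨-e, by rw [h]; push_cast; ring⟩
  have hx_eq : x = ((-B / (2 * A) : ℚ) : ℝ) + ((f / (2 * A) : ℚ) : ℝ) * √d := by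
    push_cast
    field_simp
    linear_combination hB + hf
  refine ⟨d, -B / (2 * A), f / (2 * A), ?_, hsf, ?_, hx_eq, ?_⟩
  · by_contra hd
    have hsqrt : √(d : ℝ) = ((d : ℚ) : ℝ) := by interval_cases d <;> simp
    exact hx ⟨-B / (2 * A) + f / (2 * A) * d, by rw [hx_eq, hsqrt]; push_cast; ring⟩
  · rintro ht
    exact hx ⟨-B / (2 * A), by rw [hx_eq, ht]; simp⟩
  · push_cast
    field_simp
    linear_combination hB - hf

end QuadRoots

theorem apply_zero_eq_apply_sub_of_apply_eq {α : Type*} {u : ℕ → α} (Φ : α → α)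
    (hu : ∀ n, u n = Φ (u (n + 1))) : ∀ {m n : ℕ}, m ≤ n → u m = u n → u 0 = u (n - m)
  | 0, n, _, h => h
  | m + 1, n + 1, hmn, h => by
    rw [Nat.add_sub_add_right]
    exact apply_zero_eq_apply_sub_of_apply_eq Φ hu (by omega) (by rw [hu m, hu n, h])
  | m + 1, 0, hmn, _ => absurd hmn (by omega)

-- When `c` is the conjugate of `x`, `conjCq x c n` is the conjugate of `cq x n`.
noncomputable def conjCq (x c : ℝ) : ℕ → ℝ
  | 0 => c
  | n + 1 => (conjCq x c n - pq x n)⁻¹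

section conjCq

variable {x c : ℝ} (hx : Irrational x) (hx1 : 1 < x)
include hx hx1

theorem conjCq_mem_Ioo (hc : c ∈ Set.Ioo (-1) 0) : ∀ n, conjCq x c n ∈ Set.Ioo (-1) 0
  | 0 => hc
  | n + 1 => by
    have hn := conjCq_mem_Ioo hc n
    have hlt : conjCq x c n - pq x n < -1 := by
      have : (1 : ℝ) ≤ pq x n := by exact_mod_cast one_le_pq hx hx1 n
      linarith [hn.2]
    have hneg : conjCq x c n - pq x n < 0 := by linarith
    show (conjCq x c n - pq x n)⁻¹ ∈ Set.Ioo (-1) 0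
    constructor <;> nlinarith [mul_inv_cancel₀ hneg.ne, inv_lt_zero.mpr hneg]

theorem exists_quadRoots_cq_conjCq (hc : c ∈ Set.Ioo (-1) 0) {A B C : ℤ}
    (h : QuadRoots A B C x c) : ∀ n, ∃ A' B' C' : ℤ,
      QuadRoots A' B' C' (cq x n) (conjCq x c n) ∧ B' ^ 2 - 4 * A' * C' = B ^ 2 - 4 * A * C
  | 0 => ⟨A, B, C, h, rfl⟩
  | n + 1 => by
    obtain ⟨A', B', C', h', hΔ⟩ := exists_quadRoots_cq_conjCq hc h n
    have hcn := conjCq_mem_Ioo hx hx1 hc n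
    have ha : (1 : ℝ) ≤ pq x n := by exact_mod_cast one_le_pq hx hx1 n
    refine ⟨_, _, _, h'.shift (pq x n) ((hx.cq n).ne_int _) (by linarith [hcn.2]), ?_⟩
    rw [← hΔ]
    ring

theorem pq_eq_floor_neg_inv_conjCq_succ (hc : c ∈ Set.Ioo (-1) 0) (n : ℕ) :
    pq x n = ⌊-(conjCq x c (n + 1))⁻¹⌋ := by
  have hcn := conjCq_mem_Ioo hx hx1 hc n
  rw [conjCq, inv_inv, neg_sub, sub_eq_neg_add, Int.floor_add_intCast,
    Int.floor_eq_zero_iff.mpr ⟨by linarith [hcn.2], by linarith [hcn.1]⟩, zero_add]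

theorem exists_cq_eq_self_of_quadRoots (hc : c ∈ Set.Ioo (-1) 0) {A B C : ℤ}
    (h : QuadRoots A B C x c) : ∃ T, 1 ≤ T ∧ cq x T = x := by
  set Δ := B ^ 2 - 4 * A * C
  choose A' B' C' hroots hΔ using exists_quadRoots_cq_conjCq hx hx1 hc h
  have hbox : ∀ n, (A' n, B' n, C' n) ∈ Set.Icc (-Δ) Δ ×ˢ Set.Icc (-Δ) Δ ×ˢ Set.Icc (-Δ) Δ := by
    intro n
    have hcn := conjCq_mem_Ioo hx hx1 hc n
    obtain ⟨hA, hB, hC⟩ := (hroots n).abs_le_disc (one_lt_cq hx hx1 n) hcn.1 hcn.2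
    rw [hΔ] at hA hB hC
    exact ⟨abs_le.mp hA, abs_le.mp hB, abs_le.mp hC⟩
  obtain ⟨m, n, hmn, hmn_eq⟩ := Set.Finite.exists_lt_map_eq_of_forall_mem hbox
    (Set.finite_Icc _ _ |>.prod <| Set.finite_Icc _ _ |>.prod <| Set.finite_Icc _ _)
  simp only [Prod.mk.injEq] at hmn_eq
  obtain ⟨hAeq, hBeq, hCeq⟩ := hmn_eq
  have hrep : cq x m = cq x n ∧ conjCq x c m = conjCq x c n := by
    refine (hroots m).unique_of_lt ?_ ?_
    · rw [hAeq, hBeq, hCeq]; exact hroots n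
    · linarith [(conjCq_mem_Ioo hx hx1 hc n).2, one_lt_cq hx hx1 m]
  have hback := apply_zero_eq_apply_sub_of_apply_eq (u := fun n => (cq x n, conjCq x c n))
    (fun p => (⌊-p.2⁻¹⌋ + p.1⁻¹, ⌊-p.2⁻¹⌋ + p.2⁻¹)) (fun k => by
      rw [← pq_eq_floor_neg_inv_conjCq_succ hx hx1 hc k, ← cq_eq_pq_add_inv]
      simp only [conjCq, inv_inv, add_sub_cancel])
    hmn.le (Prod.ext hrep.1 hrep.2)
  exact ⟨n - m, by omega, (congrArg Prod.fst hback).symm⟩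

end conjCq

-- `cfNum x (n + 1) / cfDen x (n + 1)` is the convergent `[a₀; a₁, …, aₙ]`.
noncomputable def cfNum (x : ℝ) : ℕ → ℤ
  | 0 => 1
  | 1 => pq x 0
  | n + 2 => pq x (n + 1) * cfNum x (n + 1) + cfNum x n

noncomputable def cfDen (x : ℝ) : ℕ → ℤ
  | 0 => 0
  | 1 => 1
  | n + 2 => pq x (n + 1) * cfDen x (n + 1) + cfDen x n

theorem mul_cfDen_eq_cfNum {x : ℝ} (hx : Irrational x) : ∀ n,
    x * (cfDen x (n + 1) * cq x (n + 1) + cfDen x n) = cfNum x (n + 1) * cq x (n + 1) + cfNum x n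
  | 0 => by simpa [cfNum, cfDen] using cq_mul_cq_succ hx 0
  | n + 1 => by
    have ih := mul_cfDen_eq_cfNum hx n
    simp only [cfNum, cfDen]
    push_cast
    linear_combination cq x (n + 2) * ih
      - (x * cfDen x (n + 1) - cfNum x (n + 1)) * cq_mul_cq_succ hx (n + 1)

section

variable {x : ℝ} (ha : ∀ n, 1 ≤ pq x n)
include ha

theorem one_le_cfNum : ∀ n, 1 ≤ cfNum x n
  | 0 => le_rfl
  | 1 => ha 0
  | n + 2 => by
    have := one_le_cfNum n
    have := one_le_cfNum (n + 1)
    have := ha (n + 1)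
    simp only [cfNum]
    nlinarith

theorem cfDen_nonneg : ∀ n, 0 ≤ cfDen x n
  | 0 => le_rfl
  | 1 => zero_le_one
  | n + 2 => by
    have := cfDen_nonneg n
    have := cfDen_nonneg (n + 1)
    have := ha (n + 1)
    simp only [cfDen]
    positivity

theorem one_le_cfDen_succ : ∀ n, 1 ≤ cfDen x (n + 1)
  | 0 => le_rfl
  | n + 1 => by
    have := one_le_cfDen_succ n
    have := cfDen_nonneg ha n
    have := ha (n + 1)
    simp only [cfDen]
    nlinarith

theorem cfNum_add_cfDen_lt : ∀ n, cfNum x n + cfDen x n < cfNum x (n + 1) + cfDen x (n + 1)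
  | 0 => by simp only [cfNum, cfDen]; linarith [ha 0]
  | n + 1 => by
    have := one_le_cfNum ha n
    have := one_le_cfNum ha (n + 1)
    have := cfDen_nonneg ha n
    have := cfDen_nonneg ha (n + 1)
    have := ha (n + 1)
    simp only [cfNum, cfDen]
    nlinarith

end

theorem exists_quadRoots_of_cq_eq_self {x : ℝ} (hx : Irrational x) {T : ℕ}
    (hT : cq x (T + 1) = x) :
    1 < x ∧ ∃ c ∈ Set.Ioo (-1) 0, ∃ A B C : ℤ, QuadRoots A B C x c := by
  have hx1 : 1 < x := hT ▸ one_lt_cq_succ hx T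
  have ha := one_le_pq hx hx1
  have hrel := mul_cfDen_eq_cfNum hx T
  rw [hT] at hrel
  set P := cfNum x (T + 1)
  set P' := cfNum x T
  set Q := cfDen x (T + 1)
  set Q' := cfDen x T
  have hQ : 0 < Q := one_le_cfDen_succ ha T
  have hQR : (Q : ℝ) ≠ 0 := by exact_mod_cast hQ.ne'
  have hroots : QuadRoots Q (Q' - P) (-P') x ((P - Q') / Q - x) := by
    refine ⟨hQ.ne', ?_, ?_⟩
    · push_cast; field_simp; ring
    · push_cast; field_simp; linear_combination hrel
  refine ⟨hx1, _, hroots.mem_Ioo_of_sign hQ (by linarith) ?_ ?_, _, _, _, hroots⟩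
  · linarith [one_le_cfNum ha T]
  · linarith [cfNum_add_cfDen_lt ha T]

/-- Galois, 1828: `x` is a reduced quadratic irrational iff `x` is
irrational and its continued fraction expansion is purely periodic. -/
theorem stmt4 (x : ℝ) :
    (∃ (d : ℕ) (r t : ℚ), 2 ≤ d ∧ Squarefree d ∧ t ≠ 0 ∧
        x = (r : ℝ) + (t : ℝ) * Real.sqrt d ∧ 1 < x ∧
        -1 < (r : ℝ) - (t : ℝ) * Real.sqrt d ∧ (r : ℝ) - (t : ℝ) * Real.sqrt d < 0)
    ↔ (Irrational x ∧ ∃ T : ℕ, 1 ≤ T ∧ ∀ n, pq x (n + T) = pq x n) := by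
  constructor
  · rintro ⟨d, r, t, hd, hsf, ht, rfl, hx1, hc₁, hc₀⟩
    have hx : Irrational (r + t * √d) :=
      ((irrational_sqrt_of_squarefree hsf hd).ratCast_mul ht).ratCast_add r
    obtain ⟨A, B, C, hroots⟩ := QuadRoots.exists_add_mul_sqrt d r t
    obtain ⟨T, hT, hfix⟩ := exists_cq_eq_self_of_quadRoots hx hx1 ⟨hc₁, hc₀⟩ hroots
    exact ⟨hx, T, hT, pq_add_of_cq_eq_self hfix⟩
  · rintro ⟨hx, T, hT, hper⟩
    obtain ⟨S, rfl⟩ : ∃ S, T = S + 1 := ⟨T - 1, by omega⟩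
    have hfix : cq x (S + 1) = x :=
      eq_of_pq_eq (hx.cq _) hx fun n => (pq_cq x _ n).trans (hper n)
    obtain ⟨hx1, c, hc, A, B, C, hroots⟩ := exists_quadRoots_of_cq_eq_self hx hfix
    obtain ⟨d, r, t, hd, hsf, ht, rfl, rfl⟩ := hroots.exists_sqrt hx
    exact ⟨d, r, t, hd, hsf, ht, rfl, hx1, hc.1, hc.2⟩
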